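/- arXiv:2303.09243 — 2 statements merged into one kernel-verified Lean document; each statement's English description precedes it below -/
import Mathlib

section
/- Let Q be the unique formal power series solution of Q = -x/2 + Σ_{a≥0} T_{2a+1} · Q^{2a+1}/a!. Then for every a ≥ 0, the partial derivative satisfies ∂Q/∂T_{2a+1} = -(2/a!) · Q^{2a+1} · ∂Q/∂x. -/
noncomputable section

/-- The ring `ℂ[[x+2]][[T_1, T_3, T_5, …]]`; variable `a : ℕ` stands for `T_{2a+1}`. -/
abbrev OSRing := MvPowerSeries ℕ (PowerSeries ℂ)

/-- The series `x = (x+2) - 2` in `ℂ[[x+2]]`. -/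
def xser : PowerSeries ℂ := PowerSeries.X - 2

/-- Formal partial derivative `∂/∂T_{2a+1}` on `ℂ[[x+2]][[T_1, T_3, …]]`. -/
def pderivT (a : ℕ) (f : OSRing) : OSRing :=
  fun d => (d a + 1) • MvPowerSeries.coeff (d + Finsupp.single a 1) f

/-- Formal partial derivative `∂/∂x` on `ℂ[[x+2]][[T_1, T_3, …]]`, acting on coefficients
(note `∂/∂x = ∂/∂(x+2)`). -/
def pderivX (f : OSRing) : OSRing :=
  fun d => PowerSeries.derivative (R := ℂ) (MvPowerSeries.coeff d f)

/-- `Q` solves `Q = -x/2 + Σ_{a ≥ 0} T_{2a+1} Q^{2a+1}/a!` (coefficientwise, the infinite sum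
being locally finite). -/
def SolvesQ (Q : OSRing) : Prop :=
  ∀ d : ℕ →₀ ℕ,
    MvPowerSeries.coeff d Q
      = MvPowerSeries.coeff d
          (MvPowerSeries.C (σ := ℕ) (R := PowerSeries ℂ) ((-(1:ℂ)/2) • xser))
        + ∑ a ∈ d.support,
            ((a.factorial : ℂ)⁻¹) •
              MvPowerSeries.coeff d (MvPowerSeries.X a * Q ^ (2*a+1))

namespace OkuyamaAux

open MvPowerSeries Finsupp Finset

abbrev Idx := (ℕ →₀ ℕ) × (ℕ →₀ ℕ)

lemma coeff_pderivT (a : ℕ) (f : OSRing) (d : ℕ →₀ ℕ) :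
    MvPowerSeries.coeff d (pderivT a f)
      = (d a + 1) • MvPowerSeries.coeff (d + Finsupp.single a 1) f := rfl

lemma coeff_pderivX (f : OSRing) (d : ℕ →₀ ℕ) :
    MvPowerSeries.coeff d (pderivX f)
      = PowerSeries.derivative (R := ℂ) (MvPowerSeries.coeff d f) := rfl

lemma coeff_csmul (c : ℂ) (f : OSRing) (d : ℕ →₀ ℕ) :
    MvPowerSeries.coeff d (c • f) = c • MvPowerSeries.coeff d f := rfl

lemma deriv_mul (f g : PowerSeries ℂ) :
    PowerSeries.derivative (R := ℂ) (f * g)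
      = PowerSeries.derivative (R := ℂ) f * g + f * PowerSeries.derivative (R := ℂ) g := by
  rw [Derivation.leibniz, smul_eq_mul, smul_eq_mul]
  ring

/-- Reindexing an antidiagonal sum by swapping. -/
lemma sum_antidiagonal_swap (n : ℕ →₀ ℕ) (F : (ℕ →₀ ℕ) → (ℕ →₀ ℕ) → PowerSeries ℂ) :
    ∑ p ∈ Finset.HasAntidiagonal.antidiagonal n, F (p : Idx).1 p.2
      = ∑ p ∈ Finset.HasAntidiagonal.antidiagonal n, F (p : Idx).2 p.1 := by
  refine Finset.sum_nbij' Prod.swap Prod.swap ?_ ?_ ?_ ?_ ?_ <;>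
    simp [Finset.HasAntidiagonal.mem_antidiagonal, add_comm]

/-- Key reindexing for the Leibniz rule of `pderivT`. -/
lemma sum_antidiagonal_shift (a : ℕ) (d : ℕ →₀ ℕ)
    (F : (ℕ →₀ ℕ) → (ℕ →₀ ℕ) → PowerSeries ℂ) :
    ∑ p ∈ Finset.HasAntidiagonal.antidiagonal (d + Finsupp.single a 1), ((p : Idx).1 a) • F p.1 p.2
      = ∑ p ∈ Finset.HasAntidiagonal.antidiagonal d,
          ((p : Idx).1 a + 1) • F (p.1 + Finsupp.single a 1) p.2 := by
  classical
  rw [← Finset.sum_filter_of_ne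
    (p := fun p : Idx => p.1 a ≠ 0)
    (fun p _ h => by
      intro h0
      exact h (by rw [h0, zero_smul]))]
  refine Finset.sum_nbij'
    (i := fun p : Idx => (p.1 - Finsupp.single a 1, p.2))
    (j := fun p : Idx => (p.1 + Finsupp.single a 1, p.2))
    ?_ ?_ ?_ ?_ ?_
  · rintro ⟨u, v⟩ hp
    simp only [Finset.mem_filter, Finset.HasAntidiagonal.mem_antidiagonal] at hp
    obtain ⟨h1, h2⟩ := hp
    rw [Finset.HasAntidiagonal.mem_antidiagonal]
    ext b
    have := DFunLike.congr_fun h1 b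
    simp only [Finsupp.add_apply, Finsupp.coe_tsub, Pi.sub_apply] at this ⊢
    rcases eq_or_ne b a with rfl | hb
    · simp only [Finsupp.single_eq_same] at this ⊢
      omega
    · simp only [Finsupp.single_eq_of_ne hb] at this ⊢
      omega
  · rintro ⟨u, v⟩ hp
    rw [Finset.HasAntidiagonal.mem_antidiagonal] at hp
    simp only [Finset.mem_filter, Finset.HasAntidiagonal.mem_antidiagonal]
    constructor
    · ext b
      have := DFunLike.congr_fun hp b
      simp only [Finsupp.add_apply] at this ⊢
      omega
    · simp
  · rintro ⟨u, v⟩ hp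
    simp only [Finset.mem_filter, Finset.HasAntidiagonal.mem_antidiagonal] at hp
    have hle : Finsupp.single a 1 ≤ u := by
      rw [Finsupp.single_le_iff]
      omega
    simp [tsub_add_cancel_of_le hle]
  · rintro ⟨u, v⟩ hp
    rw [Finset.HasAntidiagonal.mem_antidiagonal] at hp
    simp only [Prod.mk.injEq]
    exact ⟨add_tsub_cancel_right u (Finsupp.single a 1), trivial⟩
  · rintro ⟨u, v⟩ hp
    simp only [Finset.mem_filter, Finset.HasAntidiagonal.mem_antidiagonal] at hp
    have hle : Finsupp.single a 1 ≤ u := by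
      rw [Finsupp.single_le_iff]
      omega
    have h1 : u - Finsupp.single a 1 + Finsupp.single a 1 = u := tsub_add_cancel_of_le hle
    have h2 : (u - Finsupp.single a 1 : ℕ →₀ ℕ) a + 1 = u a := by
      have := DFunLike.congr_fun h1 a
      simp only [Finsupp.add_apply, Finsupp.single_eq_same] at this
      omega
    simp only [h1, h2]

/-- Leibniz rule for `pderivT`. -/
lemma pderivT_mul (a : ℕ) (f g : OSRing) :
    pderivT a (f * g) = pderivT a f * g + f * pderivT a g := by
  classical
  ext d : 1
  rw [map_add, coeff_pderivT, MvPowerSeries.coeff_mul, MvPowerSeries.coeff_mul,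
    MvPowerSeries.coeff_mul, Finset.smul_sum]
  have step : ∀ p ∈ Finset.HasAntidiagonal.antidiagonal (d + Finsupp.single a 1),
      (d a + 1) • (MvPowerSeries.coeff (p : Idx).1 f * MvPowerSeries.coeff p.2 g)
        = (p.1 a) • (MvPowerSeries.coeff p.1 f * MvPowerSeries.coeff p.2 g)
          + (p.2 a) • (MvPowerSeries.coeff p.1 f * MvPowerSeries.coeff p.2 g) := by
    intro p hp
    rw [Finset.HasAntidiagonal.mem_antidiagonal] at hp
    have := DFunLike.congr_fun hp a
    simp only [Finsupp.add_apply, Finsupp.single_eq_same] at this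
    rw [← add_smul]
    congr 1
    omega
  refine Eq.trans (Finset.sum_congr rfl step) ?_
  rw [Finset.sum_add_distrib]
  congr 1
  · rw [sum_antidiagonal_shift a d
      (fun u v => MvPowerSeries.coeff u f * MvPowerSeries.coeff v g)]
    refine Finset.sum_congr rfl fun p _ => ?_
    rw [coeff_pderivT, smul_mul_assoc]
  · rw [sum_antidiagonal_swap (d + Finsupp.single a 1)
      (fun u v => (v a) • (MvPowerSeries.coeff u f * MvPowerSeries.coeff v g))]
    rw [sum_antidiagonal_shift a d
      (fun u v => MvPowerSeries.coeff v f * MvPowerSeries.coeff u g)]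
    rw [sum_antidiagonal_swap d
      (fun u v => (u a + 1) • (MvPowerSeries.coeff v f
        * MvPowerSeries.coeff (u + Finsupp.single a 1) g))]
    refine Finset.sum_congr rfl fun p _ => ?_
    rw [coeff_pderivT, mul_smul_comm]

/-- A generic power rule for a Leibniz operator. -/
lemma pow_rule (D : OSRing → OSRing)
    (hD : ∀ f g, D (f * g) = D f * g + f * D g) (f : OSRing) :
    ∀ n : ℕ, D (f ^ (n + 1)) = (n + 1) • (f ^ n * D f) := by
  intro n
  induction n with
  | zero => simp
  | succ n ih =>
    have h2 : f ^ (n + 1 + 1) = f * f ^ (n + 1) := by ring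
    rw [h2, hD, ih, mul_smul_comm]
    have h3 : f * (f ^ n * D f) = f ^ (n + 1) * D f := by ring
    have h4 : D f * f ^ (n + 1) = f ^ (n + 1) * D f := by ring
    rw [h3, h4, succ_nsmul (f ^ (n + 1) * D f) (n + 1)]
    exact add_comm _ _

lemma pderivT_X (a b : ℕ) :
    pderivT a (MvPowerSeries.X b) = if a = b then 1 else 0 := by
  classical
  ext d : 1
  rw [coeff_pderivT, MvPowerSeries.coeff_X]
  rcases eq_or_ne a b with rfl | hab
  · rw [if_pos rfl]
    rcases eq_or_ne d 0 with rfl | hd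
    · simp [MvPowerSeries.coeff_one]
    · rw [if_neg, MvPowerSeries.coeff_one, if_neg hd, smul_zero]
      intro h
      apply hd
      ext c
      have := DFunLike.congr_fun h c
      simp only [Finsupp.add_apply, Finsupp.coe_zero, Pi.zero_apply] at this ⊢
      omega
  · rw [if_neg hab, map_zero, if_neg, smul_zero]
    intro h
    have := DFunLike.congr_fun h a
    simp only [Finsupp.add_apply, Finsupp.single_eq_same,
      Finsupp.single_apply, if_neg (Ne.symm hab)] at this
    omega

lemma pderivT_C (a : ℕ) (c : PowerSeries ℂ) :
    pderivT a (MvPowerSeries.C (σ := ℕ) (R := PowerSeries ℂ) c) = 0 := by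
  classical
  ext d : 1
  rw [coeff_pderivT, MvPowerSeries.coeff_C, if_neg, smul_zero, map_zero]
  intro h
  have := DFunLike.congr_fun h a
  simp only [Finsupp.add_apply, Finsupp.single_eq_same, Finsupp.coe_zero, Pi.zero_apply] at this
  omega

/-- Leibniz rule for `pderivX`. -/
lemma pderivX_mul (f g : OSRing) :
    pderivX (f * g) = pderivX f * g + f * pderivX g := by
  classical
  ext d : 1
  rw [map_add, coeff_pderivX, MvPowerSeries.coeff_mul, MvPowerSeries.coeff_mul,
    MvPowerSeries.coeff_mul, map_sum, ← Finset.sum_add_distrib]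
  refine Finset.sum_congr rfl fun p _ => ?_
  rw [deriv_mul, coeff_pderivX, coeff_pderivX]

lemma pderivX_X (b : ℕ) : pderivX (MvPowerSeries.X b : OSRing) = 0 := by
  classical
  ext d : 1
  rw [coeff_pderivX, MvPowerSeries.coeff_X, map_zero]
  split <;> simp

/-- The series `G = Σ_b (2b+1)/b! · T_b Q^{2b}` appearing as the derivative of the
right-hand side of the equation. -/
def Gser (Q : OSRing) : OSRing :=
  fun d => ∑ b ∈ d.support,
    ((b.factorial : ℂ)⁻¹) •
      ((2*b+1) • MvPowerSeries.coeff d (MvPowerSeries.X b * Q ^ (2*b)))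

lemma coeff_Gser (Q : OSRing) (d : ℕ →₀ ℕ) :
    MvPowerSeries.coeff d (Gser Q)
      = ∑ b ∈ d.support,
          ((b.factorial : ℂ)⁻¹) •
            ((2*b+1) • MvPowerSeries.coeff d (MvPowerSeries.X b * Q ^ (2*b))) := rfl

lemma coeff_X_mul_of_eq_zero {b : ℕ} {u : ℕ →₀ ℕ} (hu : u b = 0) (h : OSRing) :
    MvPowerSeries.coeff u (MvPowerSeries.X b * h) = 0 := by
  classical
  rw [MvPowerSeries.X, MvPowerSeries.coeff_monomial_mul, if_neg]
  rw [Finsupp.single_le_iff]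
  omega

/-- Multiplication by `Gser Q`, coefficientwise. -/
lemma coeff_Gser_mul (Q P : OSRing) (d : ℕ →₀ ℕ) (s : Finset ℕ) (hs : d.support ⊆ s) :
    MvPowerSeries.coeff d (Gser Q * P)
      = ∑ b ∈ s, ((b.factorial : ℂ)⁻¹) •
          ((2*b+1) • MvPowerSeries.coeff d
            (MvPowerSeries.X b * (Q ^ (2*b) * P))) := by
  classical
  rw [MvPowerSeries.coeff_mul]
  have step : ∀ p ∈ Finset.HasAntidiagonal.antidiagonal d,
      MvPowerSeries.coeff (p : Idx).1 (Gser Q) * MvPowerSeries.coeff p.2 P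
        = ∑ b ∈ s, ((b.factorial : ℂ)⁻¹) •
            ((2*b+1) • (MvPowerSeries.coeff p.1 (MvPowerSeries.X b * Q ^ (2*b))
              * MvPowerSeries.coeff p.2 P)) := by
    intro p hp
    rw [Finset.HasAntidiagonal.mem_antidiagonal] at hp
    rw [coeff_Gser]
    have hsub : p.1.support ⊆ s := by
      intro b hb
      apply hs
      rw [Finsupp.mem_support_iff] at hb ⊢
      have := DFunLike.congr_fun hp b
      simp only [Finsupp.add_apply] at this
      omega
    rw [Finset.sum_subset hsub (fun b _ hb => by
      rw [Finsupp.notMem_support_iff] at hb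
      rw [coeff_X_mul_of_eq_zero hb, smul_zero, smul_zero])]
    rw [Finset.sum_mul]
    refine Finset.sum_congr rfl fun b _ => ?_
    rw [smul_mul_assoc, smul_mul_assoc]
  refine Eq.trans (Finset.sum_congr rfl step) ?_
  rw [Finset.sum_comm]
  refine Finset.sum_congr rfl fun b _ => ?_
  rw [← Finset.smul_sum, ← Finset.smul_sum, ← MvPowerSeries.coeff_mul, mul_assoc]

lemma support_subset_support_add_single (d : ℕ →₀ ℕ) (a : ℕ) :
    d.support ⊆ (d + Finsupp.single a 1).support := by
  intro b hb
  rw [Finsupp.mem_support_iff] at hb ⊢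
  simp only [Finsupp.add_apply]
  omega

/-- First key identity: `(1 - G) · ∂Q/∂T_a = Q^{2a+1}/a!`. -/
lemma claimA (Q : OSRing) (hQ : SolvesQ Q) (a : ℕ) :
    (1 - Gser Q) * pderivT a Q = ((a.factorial : ℂ)⁻¹) • Q ^ (2*a+1) := by
  classical
  ext d : 1
  rw [sub_mul, one_mul, map_sub, coeff_csmul]
  have main : MvPowerSeries.coeff d (pderivT a Q)
      = (a.factorial : ℂ)⁻¹ • MvPowerSeries.coeff d (Q ^ (2*a+1))
        + MvPowerSeries.coeff d (Gser Q * pderivT a Q) := by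
    rw [coeff_pderivT, hQ (d + Finsupp.single a 1), smul_add, Finset.smul_sum]
    have hC : (d a + 1) • MvPowerSeries.coeff (d + Finsupp.single a 1)
        (MvPowerSeries.C (σ := ℕ) (R := PowerSeries ℂ) ((-(1:ℂ)/2) • xser)) = 0 := by
      rw [MvPowerSeries.coeff_C, if_neg, smul_zero]
      intro h
      have := DFunLike.congr_fun h a
      simp only [Finsupp.add_apply, Finsupp.single_eq_same, Finsupp.coe_zero,
        Pi.zero_apply] at this
      omega
    rw [hC, zero_add]
    have hterm : ∀ b ∈ (d + Finsupp.single a 1).support,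
        (d a + 1) • ((b.factorial : ℂ)⁻¹ • MvPowerSeries.coeff (d + Finsupp.single a 1)
            (MvPowerSeries.X b * Q ^ (2*b+1)))
          = (b.factorial : ℂ)⁻¹ • ((if a = b then MvPowerSeries.coeff d (Q ^ (2*a+1)) else 0)
            + (2*b+1) • MvPowerSeries.coeff d
                (MvPowerSeries.X b * (Q ^ (2*b) * pderivT a Q))) := by
      intro b _
      rw [smul_comm]
      congr 1
      have hre : (d a + 1) • MvPowerSeries.coeff (d + Finsupp.single a 1)
          (MvPowerSeries.X b * Q ^ (2*b+1))
          = MvPowerSeries.coeff d (pderivT a (MvPowerSeries.X b * Q ^ (2*b+1))) := rfl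
      rw [hre, pderivT_mul, pderivT_X, pow_rule (pderivT a) (pderivT_mul a) Q (2*b),
        map_add]
      congr 1
      · rcases eq_or_ne a b with rfl | hab
        · rw [if_pos rfl, if_pos rfl, one_mul]
        · rw [if_neg hab, if_neg hab, zero_mul, map_zero]
      · rw [mul_smul_comm, map_nsmul]
    refine Eq.trans (Finset.sum_congr rfl hterm) ?_
    have hsplit : ∀ b ∈ (d + Finsupp.single a 1).support,
        (b.factorial : ℂ)⁻¹ • ((if a = b then MvPowerSeries.coeff d (Q ^ (2*a+1)) else 0)
            + (2*b+1) • MvPowerSeries.coeff d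
                (MvPowerSeries.X b * (Q ^ (2*b) * pderivT a Q)))
          = (b.factorial : ℂ)⁻¹ • (if a = b then MvPowerSeries.coeff d (Q ^ (2*a+1)) else 0)
            + (b.factorial : ℂ)⁻¹ • ((2*b+1) • MvPowerSeries.coeff d
                (MvPowerSeries.X b * (Q ^ (2*b) * pderivT a Q))) := fun b _ => smul_add _ _ _
    refine Eq.trans (Finset.sum_congr rfl hsplit) ?_
    rw [Finset.sum_add_distrib]
    congr 1
    · rw [Finset.sum_eq_single_of_mem a (by
        rw [Finsupp.mem_support_iff]
        simp only [Finsupp.add_apply, Finsupp.single_eq_same]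
        omega)]
      · rw [if_pos rfl]
      · intro b _ hba
        rw [if_neg (Ne.symm hba), smul_zero]
    · rw [coeff_Gser_mul Q (pderivT a Q) d _ (support_subset_support_add_single d a)]
  rw [main]
  ring

/-- Second key identity: `(1 - G) · ∂Q/∂x = -1/2`. -/
lemma claimB (Q : OSRing) (hQ : SolvesQ Q) :
    (1 - Gser Q) * pderivX Q
      = MvPowerSeries.C (σ := ℕ) (R := PowerSeries ℂ) (PowerSeries.C (R := ℂ) (-(1:ℂ)/2)) := by
  classical
  ext d : 1
  rw [sub_mul, one_mul, map_sub]
  have main : MvPowerSeries.coeff d (pderivX Q)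
      = MvPowerSeries.coeff d
          (MvPowerSeries.C (σ := ℕ) (R := PowerSeries ℂ) (PowerSeries.C (R := ℂ) (-(1:ℂ)/2)))
        + MvPowerSeries.coeff d (Gser Q * pderivX Q) := by
    rw [coeff_pderivX, hQ d, map_add, map_sum]
    congr 1
    · rw [MvPowerSeries.coeff_C, MvPowerSeries.coeff_C]
      split
      · rw [Derivation.map_smul]
        have hx : PowerSeries.derivative (R := ℂ) xser = 1 := by
          rw [xser, map_sub, PowerSeries.derivative_X]
          have h2 : (2 : PowerSeries ℂ) = PowerSeries.C (R := ℂ) 2 := by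
            rw [map_ofNat]
          rw [h2, PowerSeries.derivative_C, sub_zero]
        rw [hx, PowerSeries.smul_eq_C_mul, mul_one]
      · rw [map_zero]
    · rw [coeff_Gser_mul Q (pderivX Q) d d.support subset_rfl]
      refine Finset.sum_congr rfl fun b _ => ?_
      rw [Derivation.map_smul]
      congr 1
      have hre : PowerSeries.derivative (R := ℂ)
          (MvPowerSeries.coeff d (MvPowerSeries.X b * Q ^ (2*b+1)))
          = MvPowerSeries.coeff d (pderivX (MvPowerSeries.X b * Q ^ (2*b+1))) := rfl
      rw [hre, pderivX_mul, pderivX_X, zero_mul, zero_add,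
        pow_rule pderivX pderivX_mul Q (2*b), mul_smul_comm, map_nsmul]
  rw [main]
  ring

lemma constCoeff_one_sub_Gser (Q : OSRing) :
    MvPowerSeries.constantCoeff (σ := ℕ) (R := PowerSeries ℂ) (1 - Gser Q)
      = ((1 : (PowerSeries ℂ)ˣ) : PowerSeries ℂ) := by
  rw [map_sub, map_one]
  have h0 : MvPowerSeries.constantCoeff (σ := ℕ) (R := PowerSeries ℂ) (Gser Q) = 0 := by
    have hc : MvPowerSeries.constantCoeff (σ := ℕ) (R := PowerSeries ℂ) (Gser Q)
        = MvPowerSeries.coeff (0 : ℕ →₀ ℕ) (Gser Q) := rfl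
    rw [hc, coeff_Gser]
    simp
  rw [h0, sub_zero, Units.val_one]

lemma cancel_one_sub_Gser (Q : OSRing) (A B : OSRing)
    (h : (1 - Gser Q) * A = (1 - Gser Q) * B) : A = B := by
  have hI : (1 - Gser Q) * MvPowerSeries.invOfUnit (1 - Gser Q) 1 = 1 :=
    MvPowerSeries.mul_invOfUnit _ _ (constCoeff_one_sub_Gser Q)
  set I := MvPowerSeries.invOfUnit (1 - Gser Q) 1 with hIdef
  calc A = ((1 - Gser Q) * I) * A := by rw [hI, one_mul]
    _ = I * ((1 - Gser Q) * A) := by ring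
    _ = I * ((1 - Gser Q) * B) := by rw [h]
    _ = ((1 - Gser Q) * I) * B := by ring
    _ = B := by rw [hI, one_mul]

lemma C_C_eq_smul_one (r : ℂ) :
    MvPowerSeries.C (σ := ℕ) (R := PowerSeries ℂ) (PowerSeries.C (R := ℂ) r) = r • (1 : OSRing) := by
  classical
  ext d : 1
  rw [MvPowerSeries.coeff_C, coeff_csmul, MvPowerSeries.coeff_one]
  split
  · rw [PowerSeries.smul_eq_C_mul, mul_one]
  · rw [smul_zero]

end OkuyamaAux

/-- the unique solution `Q` of the Euler–Lagrange-type equation satisfies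
`∂Q/∂T_{2a+1} = -(2/a!) Q^{2a+1} ∂Q/∂x` for every `a ≥ 0`. -/
theorem okuyama_sakai_Q_flows (Q : OSRing) (hQ : SolvesQ Q) (a : ℕ) :
    pderivT a Q = (-(2:ℂ) * (a.factorial : ℂ)⁻¹) • (Q ^ (2*a+1) * pderivX Q) := by
  classical
  apply OkuyamaAux.cancel_one_sub_Gser Q
  rw [OkuyamaAux.claimA Q hQ a, mul_smul_comm]
  have hassoc : (1 - OkuyamaAux.Gser Q) * (Q ^ (2*a+1) * pderivX Q)
      = Q ^ (2*a+1) * ((1 - OkuyamaAux.Gser Q) * pderivX Q) := by ring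
  rw [hassoc, OkuyamaAux.claimB Q hQ, OkuyamaAux.C_C_eq_smul_one, mul_smul_comm, mul_one,
    smul_smul]
  congr 1
  ring
end
end

section
/- Let Q be the unique solution of Q = -x/2 + Σ_{a≥0} T_{2a+1}·Q^{2a+1}/a!, and define F_0 := (1/2)·Σ_{a,b≥0} T̃_{2a+1} T̃_{2b+1} Q^{2a+2b+2}/(a! b! (a+b+1)) − x·Σ_{b≥0} T̃_{2b+1} Q^{2b+1}/(b!(2b+1)) + (x²/4)·log Q, where T̃_{2a+1} = T_{2a+1} − δ_{a,0}. Then ∂²F_0/∂T_{2a+1}∂T_{2b+1} = Q^{2a+2b+2}/(a! b! (a+b+1)) for all a, b ≥ 0. -/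
set_option maxHeartbeats 1000000


noncomputable section

/-- `LQ` is the formal logarithm `log Q`: it is characterized by `Q·d(LQ) = d(Q)` for the
formal derivations `∂/∂x` and all `∂/∂T_{2a+1}`, together with vanishing of its total
constant term (note `Q(-2, 0) = 1`, so `log Q` has zero constant term). -/
def IsLogQ (Q LQ : OSRing) : Prop :=
  pderivX LQ * Q = pderivX Q ∧ (∀ a : ℕ, pderivT a LQ * Q = pderivT a Q) ∧
    PowerSeries.coeff 0 (MvPowerSeries.coeff (0 : ℕ →₀ ℕ) LQ) = 0

/-- `T̃_{2a+1} = T_{2a+1} - δ_{a,0}`. -/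
def Ttil (a : ℕ) : OSRing :=
  MvPowerSeries.X a - (if a = 0 then 1 else 0)

/-- The genus-zero free energy
`F₀ = (1/2) Σ_{a,b≥0} T̃_{2a+1} T̃_{2b+1} Q^{2a+2b+2}/(a! b! (a+b+1))
  − x Σ_{b≥0} T̃_{2b+1} Q^{2b+1}/(b!(2b+1)) + (x²/4) log Q`,
defined coefficientwise (each infinite sum is locally finite: the term indexed by `a ≥ 1`
is a multiple of the variable `T_{2a+1}`). -/
def F0 (Q LQ : OSRing) : OSRing := fun d =>
  ((1:ℂ)/2) • (∑ a ∈ insert 0 d.support, ∑ b ∈ insert 0 d.support,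
      (((a.factorial : ℂ) * (b.factorial : ℂ) * ((a:ℂ) + (b:ℂ) + 1))⁻¹) •
        MvPowerSeries.coeff d (Ttil a * Ttil b * Q ^ (2*a+2*b+2)))
    - ∑ b ∈ insert 0 d.support,
        (((b.factorial : ℂ) * (2*(b:ℂ)+1))⁻¹) •
          MvPowerSeries.coeff d
            (MvPowerSeries.C (σ := ℕ) (R := PowerSeries ℂ) xser * Ttil b * Q ^ (2*b+1))
    + MvPowerSeries.coeff d
        (((1:ℂ)/4) • (MvPowerSeries.C (σ := ℕ) (R := PowerSeries ℂ) xser ^ 2 * LQ))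

open MvPowerSeries Finset

local notation "cf" => MvPowerSeries.coeff (σ := ℕ) (R := PowerSeries ℂ)

lemma coeff_apply' (f : OSRing) (d : ℕ →₀ ℕ) : cf d f = f d := rfl

lemma coeff_pderivT (c : ℕ) (f : OSRing) (d : ℕ →₀ ℕ) :
    cf d (pderivT c f) = (d c + 1) • cf (d + Finsupp.single c 1) f := rfl

lemma coeff_csmul (r : ℂ) (f : OSRing) (d : ℕ →₀ ℕ) : cf d (r • f) = r • cf d f := rfl

lemma pderivT_zero (c : ℕ) : pderivT c (0 : OSRing) = 0 := by
  ext d; simp [coeff_pderivT]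

lemma pderivT_add (c : ℕ) (f g : OSRing) :
    pderivT c (f + g) = pderivT c f + pderivT c g := by
  ext d; simp [coeff_pderivT, smul_add]

lemma pderivT_smul (c : ℕ) (r : ℂ) (f : OSRing) :
    pderivT c (r • f) = r • pderivT c f := by
  ext d
  rw [coeff_pderivT, coeff_csmul, coeff_csmul, coeff_pderivT, smul_comm]

lemma pderivT_sub (c : ℕ) (f g : OSRing) :
    pderivT c (f - g) = pderivT c f - pderivT c g := by
  ext d; simp [coeff_pderivT, smul_sub]

lemma pderivT_sum {ι : Type*} (c : ℕ) (s : Finset ι) (F : ι → OSRing) :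
    pderivT c (∑ i ∈ s, F i) = ∑ i ∈ s, pderivT c (F i) := by
  classical
  induction s using Finset.induction_on with
  | empty => simp [pderivT_zero]
  | insert _ _ h ih => rw [Finset.sum_insert h, Finset.sum_insert h, pderivT_add, ih]

lemma shift_sum (c : ℕ) (d : ℕ →₀ ℕ) (F : (ℕ →₀ ℕ) × (ℕ →₀ ℕ) → PowerSeries ℂ) :
    ∑ p ∈ antidiagonal (d + (Finsupp.single c 1 : ℕ →₀ ℕ)), p.1 c • F p
      = ∑ p ∈ antidiagonal d, (p.1 c + 1) • F (p.1 + Finsupp.single c 1, p.2) := by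
  classical
  set e := Finsupp.single c 1 with he
  have hfil : ∑ p ∈ (antidiagonal (d + e)).filter (fun q => q.1 c ≠ 0), p.1 c • F p
      = ∑ p ∈ antidiagonal (d + e), p.1 c • F p := by
    refine Finset.sum_filter_of_ne fun q _ h => ?_
    intro h0
    exact h (by rw [h0, zero_smul])
  rw [← hfil]
  refine Finset.sum_bij' (fun p _ => (p.1 - e, p.2)) (fun p _ => (p.1 + e, p.2)) ?_ ?_ ?_ ?_ ?_
  · intro p hp
    simp only [Finset.mem_filter, Finset.HasAntidiagonal.mem_antidiagonal] at hp
    obtain ⟨hsum, hne⟩ := hp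
    have hle : e ≤ p.1 := by rw [he, Finsupp.single_le_iff]; omega
    rw [Finset.HasAntidiagonal.mem_antidiagonal]
    have h1 : p.1 - e + e = p.1 := tsub_add_cancel_of_le hle
    have h2 : (p.1 - e + p.2) + e = d + e := by rw [add_right_comm, h1, hsum]
    exact add_right_cancel h2
  · intro p hp
    rw [Finset.HasAntidiagonal.mem_antidiagonal] at hp
    simp only [Finset.mem_filter, Finset.HasAntidiagonal.mem_antidiagonal]
    constructor
    · rw [add_right_comm, hp]
    · simp [he, Finsupp.add_apply, Finsupp.single_eq_same]
  · intro p hp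
    simp only [Finset.mem_filter, Finset.HasAntidiagonal.mem_antidiagonal] at hp
    have hle : e ≤ p.1 := by rw [he, Finsupp.single_le_iff]; omega
    simp [tsub_add_cancel_of_le hle]
  · intro p hp
    simp
  · intro p hp
    simp only [Finset.mem_filter, Finset.HasAntidiagonal.mem_antidiagonal] at hp
    obtain ⟨hsum, hne⟩ := hp
    have hle : e ≤ p.1 := by rw [he, Finsupp.single_le_iff]; omega
    have h1 : p.1 - e + e = p.1 := tsub_add_cancel_of_le hle
    have h2 : (p.1 - e) c + 1 = p.1 c := by
      rw [Finsupp.tsub_apply, he, Finsupp.single_eq_same]; omega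
    simp only [h2, h1]

lemma shift_sum₂ (c : ℕ) (d : ℕ →₀ ℕ) (F : (ℕ →₀ ℕ) × (ℕ →₀ ℕ) → PowerSeries ℂ) :
    ∑ p ∈ antidiagonal (d + (Finsupp.single c 1 : ℕ →₀ ℕ)), p.2 c • F p
      = ∑ p ∈ antidiagonal d, (p.2 c + 1) • F (p.1, p.2 + Finsupp.single c 1) := by
  classical
  set e := Finsupp.single c 1 with he
  have hfil : ∑ p ∈ (antidiagonal (d + e)).filter (fun q => q.2 c ≠ 0), p.2 c • F p
      = ∑ p ∈ antidiagonal (d + e), p.2 c • F p := by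
    refine Finset.sum_filter_of_ne fun q _ h => ?_
    intro h0
    exact h (by rw [h0, zero_smul])
  rw [← hfil]
  refine Finset.sum_bij' (fun p _ => (p.1, p.2 - e)) (fun p _ => (p.1, p.2 + e)) ?_ ?_ ?_ ?_ ?_
  · intro p hp
    simp only [Finset.mem_filter, Finset.HasAntidiagonal.mem_antidiagonal] at hp
    obtain ⟨hsum, hne⟩ := hp
    have hle : e ≤ p.2 := by rw [he, Finsupp.single_le_iff]; omega
    rw [Finset.HasAntidiagonal.mem_antidiagonal]
    have h1 : p.2 - e + e = p.2 := tsub_add_cancel_of_le hle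
    have h2 : (p.1 + (p.2 - e)) + e = d + e := by rw [add_assoc, h1, hsum]
    exact add_right_cancel h2
  · intro p hp
    rw [Finset.HasAntidiagonal.mem_antidiagonal] at hp
    simp only [Finset.mem_filter, Finset.HasAntidiagonal.mem_antidiagonal]
    constructor
    · rw [← add_assoc, hp]
    · simp [he, Finsupp.add_apply, Finsupp.single_eq_same]
  · intro p hp
    simp only [Finset.mem_filter, Finset.HasAntidiagonal.mem_antidiagonal] at hp
    have hle : e ≤ p.2 := by rw [he, Finsupp.single_le_iff]; omega
    simp [tsub_add_cancel_of_le hle]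
  · intro p hp
    simp
  · intro p hp
    simp only [Finset.mem_filter, Finset.HasAntidiagonal.mem_antidiagonal] at hp
    obtain ⟨hsum, hne⟩ := hp
    have hle : e ≤ p.2 := by rw [he, Finsupp.single_le_iff]; omega
    have h1 : p.2 - e + e = p.2 := tsub_add_cancel_of_le hle
    have h2 : (p.2 - e) c + 1 = p.2 c := by
      rw [Finsupp.tsub_apply, he, Finsupp.single_eq_same]; omega
    simp only [h2, h1]

lemma pderivT_mul (c : ℕ) (f g : OSRing) :
    pderivT c (f * g) = pderivT c f * g + f * pderivT c g := by
  classical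
  ext d
  rw [map_add, coeff_pderivT, MvPowerSeries.coeff_mul, MvPowerSeries.coeff_mul,
    MvPowerSeries.coeff_mul, Finset.smul_sum]
  set e := Finsupp.single c 1 with he
  have key : ∀ p ∈ antidiagonal (d + e),
      (d c + 1) • (cf p.1 f * cf p.2 g)
        = p.1 c • (cf p.1 f * cf p.2 g) + p.2 c • (cf p.1 f * cf p.2 g) := by
    intro p hp
    rw [Finset.HasAntidiagonal.mem_antidiagonal] at hp
    rw [← add_smul]
    have h1 : p.1 c + p.2 c = d c + 1 := by
      have := congrArg (fun h : ℕ →₀ ℕ => h c) hp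
      simpa [he, Finsupp.add_apply, Finsupp.single_eq_same] using this
    rw [h1]
  rw [Finset.sum_congr rfl key, Finset.sum_add_distrib,
    shift_sum c d (fun p => cf p.1 f * cf p.2 g),
    shift_sum₂ c d (fun p => cf p.1 f * cf p.2 g)]
  simp only [coeff_pderivT, smul_mul_assoc, mul_smul_comm]

lemma pderivT_C (c : ℕ) (r : PowerSeries ℂ) :
    pderivT c (MvPowerSeries.C (σ := ℕ) (R := PowerSeries ℂ) r) = 0 := by
  classical
  refine MvPowerSeries.ext fun d => ?_
  have hne : d + Finsupp.single c 1 ≠ 0 := by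
    intro h
    have := congrArg (fun h : ℕ →₀ ℕ => h c) h
    simp [Finsupp.single_eq_same] at this
  rw [coeff_pderivT, MvPowerSeries.coeff_C, if_neg hne, smul_zero, map_zero]

lemma pderivT_one (c : ℕ) : pderivT c (1 : OSRing) = 0 := by
  rw [← map_one (MvPowerSeries.C (σ := ℕ) (R := PowerSeries ℂ)), pderivT_C]

lemma pderivT_X (c a : ℕ) :
    pderivT c (MvPowerSeries.X a : OSRing) = if a = c then 1 else 0 := by
  classical
  ext d
  rw [coeff_pderivT, MvPowerSeries.coeff_X]
  by_cases hac : a = c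
  · subst hac
    by_cases hd : d = 0
    · subst hd
      rw [if_pos (by simp), if_pos rfl, MvPowerSeries.coeff_zero_one]
      simp
    · rw [if_neg, if_pos rfl, MvPowerSeries.coeff_one, if_neg hd, smul_zero]
      intro h
      exact hd (by simpa using (add_eq_right).1 h)
  · have hne : d + Finsupp.single c 1 ≠ Finsupp.single a 1 := by
      intro h
      have := congrArg (fun h : ℕ →₀ ℕ => h c) h
      simp [Finsupp.single_eq_same, Finsupp.single_apply, hac] at this
    rw [if_neg hne, if_neg hac, map_zero, smul_zero]

lemma pderivT_Ttil (c a : ℕ) :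
    pderivT c (Ttil a) = if a = c then 1 else 0 := by
  rw [Ttil, pderivT_sub, pderivT_X]
  by_cases h : a = 0
  · rw [if_pos h, pderivT_one, sub_zero]
  · rw [if_neg h, pderivT_zero, sub_zero]

lemma pderivT_pow (c : ℕ) (f : OSRing) (n : ℕ) :
    pderivT c (f ^ (n + 1)) = ((n : ℂ) + 1) • (f ^ n * pderivT c f) := by
  induction n with
  | zero => simp [pderivT]
  | succ n ih =>
    have key : ∀ M : OSRing, ((n:ℂ)+1) • M + M = (((n+1:ℕ):ℂ)+1) • M := by
      intro M
      push_cast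
      rw [add_smul ((n:ℂ)+1) 1, one_smul]
    rw [pow_succ, pderivT_mul, ih, smul_mul_assoc,
      show f ^ n * pderivT c f * f = f ^ (n + 1) * pderivT c f by ring, key]

def Ap (s : Finset ℕ) (f g : OSRing) : Prop :=
  ∀ d : ℕ →₀ ℕ, d.support ⊆ s → cf d f = cf d g

namespace Ap

variable {s s' : Finset ℕ} {f g h f₁ f₂ g₁ g₂ : OSRing}

lemma of_eq (h : f = g) : Ap s f g := fun d _ => by rw [h]

lemma refl (f : OSRing) : Ap s f f := fun _ _ => rfl

lemma trans (h1 : Ap s f g) (h2 : Ap s g h) : Ap s f h := fun d hd => (h1 d hd).trans (h2 d hd)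

lemma symm (h1 : Ap s f g) : Ap s g f := fun d hd => (h1 d hd).symm

lemma mono (hss : s ⊆ s') (H : Ap s' f g) : Ap s f g := fun d hd => H d (hd.trans hss)

lemma add (h1 : Ap s f₁ g₁) (h2 : Ap s f₂ g₂) : Ap s (f₁ + f₂) (g₁ + g₂) := fun d hd => by
  rw [map_add, map_add, h1 d hd, h2 d hd]

lemma sub (h1 : Ap s f₁ g₁) (h2 : Ap s f₂ g₂) : Ap s (f₁ - f₂) (g₁ - g₂) := fun d hd => by
  rw [map_sub, map_sub, h1 d hd, h2 d hd]

lemma smul (r : ℂ) (h1 : Ap s f g) : Ap s (r • f) (r • g) := fun d hd => by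
  rw [coeff_csmul, coeff_csmul, h1 d hd]

lemma mul (h1 : Ap s f₁ g₁) (h2 : Ap s f₂ g₂) : Ap s (f₁ * f₂) (g₁ * g₂) := by
  classical
  intro d hd
  rw [MvPowerSeries.coeff_mul, MvPowerSeries.coeff_mul]
  refine Finset.sum_congr rfl fun p hp => ?_
  rw [Finset.HasAntidiagonal.mem_antidiagonal] at hp
  have hp1 : p.1.support ⊆ s := by
    refine (Finsupp.support_mono ?_).trans hd
    rw [← hp]; exact le_self_add
  have hp2 : p.2.support ⊆ s := by
    refine (Finsupp.support_mono ?_).trans hd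
    rw [← hp]; exact le_add_self
  rw [h1 p.1 hp1, h2 p.2 hp2]

lemma pderiv (c : ℕ) (H : Ap (insert c s) f g) : Ap s (pderivT c f) (pderivT c g) := by
  intro d hd
  rw [coeff_pderivT, coeff_pderivT, H]
  refine (Finsupp.support_add).trans ?_
  refine Finset.union_subset (hd.trans (Finset.subset_insert _ _)) ?_
  refine (Finsupp.support_single_subset).trans ?_
  simp

lemma cancel (hQ0 : cf (0 : ℕ →₀ ℕ) h ≠ 0) (H : Ap s (h * f) (h * g)) : Ap s f g := by
  classical
  suffices key : ∀ n : ℕ, ∀ d : ℕ →₀ ℕ, (d.sum fun _ m => m) < n → d.support ⊆ s →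
      cf d f = cf d g by
    intro d hds
    exact key _ d (Nat.lt_succ_self _) hds
  intro n
  induction n with
  | zero => intro d hlt; omega
  | succ n ih =>
    intro d hdn hds
    have hqf := H d hds
    rw [MvPowerSeries.coeff_mul, MvPowerSeries.coeff_mul] at hqf
    have hmem : ((0 : ℕ →₀ ℕ), d) ∈ Finset.HasAntidiagonal.antidiagonal d := by
      rw [Finset.HasAntidiagonal.mem_antidiagonal, zero_add]
    rw [← Finset.add_sum_erase _ _ hmem, ← Finset.add_sum_erase _ _ hmem] at hqf
    have hrest : ∀ p ∈ (Finset.HasAntidiagonal.antidiagonal d).erase ((0 : ℕ →₀ ℕ), d),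
        cf p.2 f = cf p.2 g := by
      intro p hp
      obtain ⟨hne, hmem'⟩ := Finset.mem_erase.1 hp
      rw [Finset.HasAntidiagonal.mem_antidiagonal] at hmem'
      have hp1 : p.1 ≠ 0 := by
        rintro h0
        apply hne
        rw [Prod.ext_iff]
        refine ⟨h0, ?_⟩
        rw [← hmem', h0, zero_add]
      have hsum1 : (p.1.sum fun _ m => m) ≠ 0 := by
        intro h0
        apply hp1
        ext i
        by_cases hi : i ∈ p.1.support
        · exact absurd h0 (by
            rw [Finsupp.sum]
            intro hz
            have := (Finset.sum_eq_zero_iff).1 hz i hi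
            exact (Finsupp.mem_support_iff.1 hi) this)
        · simpa using Finsupp.notMem_support_iff.1 hi
      have hadd : (d.sum fun _ m => m) = (p.1.sum fun _ m => m) + (p.2.sum fun _ m => m) := by
        rw [← hmem']
        exact Finsupp.sum_add_index' (fun _ => rfl) (fun _ _ _ => rfl)
      refine ih p.2 (by omega) ?_
      refine (Finsupp.support_mono ?_).trans hds
      rw [← hmem']; exact le_add_self
    have hs2 : ∑ p ∈ (Finset.HasAntidiagonal.antidiagonal d).erase ((0 : ℕ →₀ ℕ), d), cf p.1 h * cf p.2 f
        = ∑ p ∈ (Finset.HasAntidiagonal.antidiagonal d).erase ((0 : ℕ →₀ ℕ), d), cf p.1 h * cf p.2 g :=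
      Finset.sum_congr rfl fun p hp => by rw [hrest p hp]
    rw [hs2] at hqf
    have := add_right_cancel hqf
    exact mul_left_cancel₀ hQ0 this

end Ap

def cx : OSRing := MvPowerSeries.C (σ := ℕ) (R := PowerSeries ℂ) xser

def κ (a b : ℕ) : ℂ := ((a.factorial : ℂ) * (b.factorial : ℂ) * ((a:ℂ) + (b:ℂ) + 1))⁻¹

def μ (b : ℕ) : ℂ := ((b.factorial : ℂ) * (2*(b:ℂ)+1))⁻¹

def Sfun (Q : OSRing) (t : Finset ℕ) : OSRing :=
  ∑ a ∈ t, ((a.factorial : ℂ)⁻¹) • (Ttil a * Q ^ (2*a+1))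

def Sg (Q : OSRing) (t : Finset ℕ) : OSRing :=
  ∑ a ∈ t, ((a.factorial : ℂ)⁻¹) • (Ttil a * Q ^ (2*a))

def F0E (Q LQ : OSRing) (t : Finset ℕ) : OSRing :=
  ((1:ℂ)/2) • (∑ a ∈ t, ∑ b ∈ t, κ a b • (Ttil a * Ttil b * Q ^ (2*a+2*b+2)))
    - ∑ b ∈ t, μ b • (cx * Ttil b * Q ^ (2*b+1))
    + ((1:ℂ)/4) • (cx ^ 2 * LQ)

def G (Q : OSRing) (t : Finset ℕ) (c : ℕ) : OSRing :=
  (∑ b ∈ t, κ c b • (Ttil b * Q ^ (2*c+2*b+2))) - μ c • (cx * Q ^ (2*c+1))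

lemma coeff_X_mul_zero {d : ℕ →₀ ℕ} {a : ℕ} (hd : d a = 0) (f : OSRing) :
    cf d (MvPowerSeries.X a * f) = 0 := by
  classical
  rw [MvPowerSeries.X, MvPowerSeries.coeff_monomial_mul, if_neg]
  intro h
  have := h a
  rw [Finsupp.single_eq_same] at this
  omega

lemma coeff_Ttil_mul {d : ℕ →₀ ℕ} {a : ℕ} (hd : d a = 0) (ha : a ≠ 0) (f : OSRing) :
    cf d (Ttil a * f) = 0 := by
  rw [Ttil, if_neg ha, sub_zero, coeff_X_mul_zero hd]

lemma Sfun_sub (Q : OSRing) (t : Finset ℕ) (h0 : 0 ∈ t) :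
    Sfun Q t
      = (∑ a ∈ t, ((a.factorial : ℂ)⁻¹) • (MvPowerSeries.X a * Q ^ (2*a+1))) - Q := by
  classical
  have key : ∀ a ∈ t,
      ((a.factorial : ℂ)⁻¹) • (MvPowerSeries.X a * Q ^ (2*a+1))
        - ((a.factorial : ℂ)⁻¹) • (Ttil a * Q ^ (2*a+1))
      = if a = 0 then Q else 0 := by
    intro a _
    rw [← smul_sub, ← sub_mul, Ttil, sub_sub_cancel]
    by_cases ha : a = 0
    · subst ha
      simp [Nat.factorial]
    · rw [if_neg ha, if_neg ha, zero_mul, smul_zero]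
  have h2 := Finset.sum_congr rfl key
  rw [Finset.sum_sub_distrib, Finset.sum_ite_eq' t 0 (fun _ => Q), if_pos h0,
    sub_eq_iff_eq_add] at h2
  rw [Sfun, h2, add_sub_cancel_left]

lemma Sfun_approx {Q : OSRing} (hQ : SolvesQ Q) (t : Finset ℕ) (h0 : 0 ∈ t) :
    Ap t (Sfun Q t) (((1:ℂ)/2) • cx) := by
  classical
  intro d hd
  have hsq := hQ d
  have hext : ∑ a ∈ d.support, ((a.factorial : ℂ)⁻¹) • cf d (MvPowerSeries.X a * Q ^ (2*a+1))
      = ∑ a ∈ t, ((a.factorial : ℂ)⁻¹) • cf d (MvPowerSeries.X a * Q ^ (2*a+1)) := by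
    refine Finset.sum_subset hd fun a _ ha => ?_
    rw [coeff_X_mul_zero (Finsupp.notMem_support_iff.1 ha), smul_zero]
  rw [hext] at hsq
  rw [Sfun_sub Q t h0, map_sub, map_sum]
  simp only [coeff_csmul]
  have hx : ∑ a ∈ t, ((a.factorial : ℂ)⁻¹) • cf d (MvPowerSeries.X a * Q ^ (2*a+1))
      = cf d Q - cf d (MvPowerSeries.C (σ := ℕ) (R := PowerSeries ℂ) ((-(1:ℂ)/2) • xser)) := by
    rw [hsq]; ring
  rw [hx]
  have hy : cf d Q - cf d (MvPowerSeries.C (σ := ℕ) (R := PowerSeries ℂ) ((-(1:ℂ)/2) • xser)) - cf d Q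
      = - cf d (MvPowerSeries.C (σ := ℕ) (R := PowerSeries ℂ) ((-(1:ℂ)/2) • xser)) := by ring
  rw [hy]
  simp only [cx]
  rw [MvPowerSeries.coeff_C, MvPowerSeries.coeff_C]
  split_ifs with h
  · rw [← neg_smul]
    norm_num
  · simp

lemma pderivT_cx (c : ℕ) : pderivT c cx = 0 := pderivT_C c xser

lemma coeff0_Q_ne {Q : OSRing} (hQ : SolvesQ Q) : cf (0 : ℕ →₀ ℕ) Q ≠ 0 := by
  classical
  have h := hQ 0
  rw [Finsupp.support_zero, Finset.sum_empty, add_zero, MvPowerSeries.coeff_zero_C] at h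
  rw [h]
  intro hc
  have := congrArg (PowerSeries.coeff 1) hc
  rw [map_smul, map_zero] at this
  have hx : PowerSeries.coeff 1 xser = 1 := by
    rw [xser, map_sub, PowerSeries.coeff_one_X,
      show (2 : PowerSeries ℂ) = PowerSeries.C 2 from (map_ofNat _ 2).symm,
      PowerSeries.coeff_C]
    norm_num
  rw [hx, smul_eq_mul, mul_one] at this
  norm_num at this

lemma F0_approx (Q LQ : OSRing) (t : Finset ℕ) (h0 : 0 ∈ t) :
    Ap t (F0 Q LQ) (F0E Q LQ t) := by
  classical
  intro d hd
  have hins : insert 0 d.support ⊆ t := Finset.insert_subset h0 hd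
  rw [coeff_apply', F0, F0E, map_add, map_sub, coeff_csmul, coeff_csmul, map_sum]
  simp only [map_sum, coeff_csmul, cx, κ, μ]
  have hmem : ∀ x : ℕ, x ∈ t → x ∉ insert 0 d.support → x ≠ 0 ∧ d x = 0 := by
    intro x _ hx
    simp only [Finset.mem_insert, not_or, Finsupp.mem_support_iff, not_not] at hx
    exact hx
  have hdouble :
      (∑ a ∈ insert 0 d.support, ∑ b ∈ insert 0 d.support,
        (((a.factorial : ℂ) * (b.factorial : ℂ) * ((a:ℂ) + (b:ℂ) + 1))⁻¹) •
          cf d (Ttil a * Ttil b * Q ^ (2*a+2*b+2)))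
      = ∑ a ∈ t, ∑ b ∈ t,
        (((a.factorial : ℂ) * (b.factorial : ℂ) * ((a:ℂ) + (b:ℂ) + 1))⁻¹) •
          cf d (Ttil a * Ttil b * Q ^ (2*a+2*b+2)) := by
    have hstep1 : ∀ a : ℕ,
        (∑ b ∈ insert 0 d.support, (((a.factorial : ℂ) * (b.factorial : ℂ) * ((a:ℂ) + (b:ℂ) + 1))⁻¹) •
          cf d (Ttil a * Ttil b * Q ^ (2*a+2*b+2)))
        = ∑ b ∈ t, (((a.factorial : ℂ) * (b.factorial : ℂ) * ((a:ℂ) + (b:ℂ) + 1))⁻¹) •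
          cf d (Ttil a * Ttil b * Q ^ (2*a+2*b+2)) := by
      intro a
      refine Finset.sum_subset hins fun b hbt hb => ?_
      obtain ⟨hb0, hdb⟩ := hmem b hbt hb
      rw [show Ttil a * Ttil b * Q ^ (2*a+2*b+2) = Ttil b * (Ttil a * Q ^ (2*a+2*b+2)) by ring,
        coeff_Ttil_mul hdb hb0, smul_zero]
    refine (Finset.sum_congr rfl fun a _ => hstep1 a).trans ?_
    refine Finset.sum_subset hins fun a hat ha => ?_
    obtain ⟨ha0, hda⟩ := hmem a hat ha
    refine Finset.sum_eq_zero fun b _ => ?_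
    rw [mul_assoc (Ttil a), coeff_Ttil_mul hda ha0, smul_zero]
  have hneg :
      (∑ b ∈ insert 0 d.support, (((b.factorial : ℂ) * (2*(b:ℂ)+1))⁻¹) •
          cf d (MvPowerSeries.C (σ := ℕ) (R := PowerSeries ℂ) xser * Ttil b * Q ^ (2*b+1)))
      = ∑ b ∈ t, (((b.factorial : ℂ) * (2*(b:ℂ)+1))⁻¹) •
          cf d (MvPowerSeries.C (σ := ℕ) (R := PowerSeries ℂ) xser * Ttil b * Q ^ (2*b+1)) := by
    refine Finset.sum_subset hins fun b hbt hb => ?_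
    obtain ⟨hb0, hdb⟩ := hmem b hbt hb
    rw [show MvPowerSeries.C (σ := ℕ) (R := PowerSeries ℂ) xser * Ttil b * Q ^ (2*b+1)
        = Ttil b * (MvPowerSeries.C (σ := ℕ) (R := PowerSeries ℂ) xser * Q ^ (2*b+1)) by ring,
      coeff_Ttil_mul hdb hb0, smul_zero]
  rw [hdouble, hneg]

lemma termD (Q : OSRing) (a b c : ℕ) :
    pderivT c (κ a b • (Ttil a * Ttil b * Q ^ (2*a+2*b+2)))
      = (if a = c then κ a b • (Ttil b * Q ^ (2*a+2*b+2)) else 0)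
        + (if b = c then κ a b • (Ttil a * Q ^ (2*a+2*b+2)) else 0)
        + (κ a b * (2*(a:ℂ)+2*(b:ℂ)+2)) •
            (Ttil a * Ttil b * (Q ^ (2*a+2*b+1) * pderivT c Q)) := by
  have hcast : (((2*a+2*b+1 : ℕ) : ℂ) + 1) = 2*(a:ℂ)+2*(b:ℂ)+2 := by push_cast; ring
  rw [pderivT_smul, show 2*a+2*b+2 = (2*a+2*b+1)+1 by ring, pderivT_mul, pderivT_mul,
    pderivT_Ttil, pderivT_Ttil, pderivT_pow, hcast]
  by_cases hac : a = c <;> by_cases hbc : b = c <;>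
    simp only [hac, hbc, if_true, if_false, ite_true, ite_false, one_mul, mul_one, zero_mul,
      mul_zero, add_zero, zero_add, add_mul, smul_add, mul_smul_comm, smul_smul]

lemma termN (Q : OSRing) (b c : ℕ) :
    pderivT c (μ b • (cx * Ttil b * Q ^ (2*b+1)))
      = (if b = c then μ b • (cx * Q ^ (2*b+1)) else 0)
        + (μ b * (2*(b:ℂ)+1)) • (cx * Ttil b * (Q ^ (2*b) * pderivT c Q)) := by
  have hcast : (((2*b : ℕ) : ℂ) + 1) = 2*(b:ℂ)+1 := by push_cast; ring
  rw [pderivT_smul, pderivT_mul, pderivT_mul, pderivT_cx, pderivT_Ttil,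
    pderivT_pow, hcast, zero_mul, zero_add]
  by_cases hbc : b = c <;>
    simp only [hbc, if_true, if_false, ite_true, ite_false, one_mul, mul_one, zero_mul,
      mul_zero, add_zero, zero_add, add_mul, smul_add, mul_smul_comm, smul_smul]

lemma hlog (LQ : OSRing) (c : ℕ) :
    pderivT c (cx ^ 2 * LQ) = cx ^ 2 * pderivT c LQ := by
  rw [pow_two, mul_assoc, pderivT_mul, pderivT_cx, zero_mul, zero_add, pderivT_mul,
    pderivT_cx, zero_mul, zero_add, ← mul_assoc, ← pow_two]

lemma kappa_symm (a b : ℕ) : κ a b = κ b a := by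
  rw [κ, κ]; congr 1; ring

lemma hdbl (Q : OSRing) (t : Finset ℕ) (c : ℕ) (hc : c ∈ t) :
    pderivT c (∑ a ∈ t, ∑ b ∈ t, κ a b • (Ttil a * Ttil b * Q ^ (2*a+2*b+2)))
      = (∑ b ∈ t, κ c b • (Ttil b * Q ^ (2*c+2*b+2)))
        + (∑ b ∈ t, κ c b • (Ttil b * Q ^ (2*c+2*b+2)))
        + ∑ a ∈ t, ∑ b ∈ t, (κ a b * (2*(a:ℂ)+2*(b:ℂ)+2)) •
            (Ttil a * Ttil b * (Q ^ (2*a+2*b+1) * pderivT c Q)) := by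
  classical
  rw [pderivT_sum]
  have h1 : ∀ a ∈ t, pderivT c (∑ b ∈ t, κ a b • (Ttil a * Ttil b * Q ^ (2*a+2*b+2)))
      = ∑ b ∈ t, ((if a = c then κ a b • (Ttil b * Q ^ (2*a+2*b+2)) else 0)
        + (if b = c then κ a b • (Ttil a * Q ^ (2*a+2*b+2)) else 0)
        + (κ a b * (2*(a:ℂ)+2*(b:ℂ)+2)) •
            (Ttil a * Ttil b * (Q ^ (2*a+2*b+1) * pderivT c Q))) := by
    intro a _
    rw [pderivT_sum]
    exact Finset.sum_congr rfl fun b _ => termD Q a b c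
  refine (Finset.sum_congr rfl h1).trans ?_
  simp only [Finset.sum_add_distrib]
  congr 1
  congr 1
  · -- ∑ a ∑ b (if a = c …) = ∑ b κ c b • (Ttil b * Q^{2c+2b+2})
    have h2 : ∀ a ∈ t, (∑ b ∈ t, if a = c then κ a b • (Ttil b * Q ^ (2*a+2*b+2)) else 0)
        = if a = c then ∑ b ∈ t, κ c b • (Ttil b * Q ^ (2*c+2*b+2)) else 0 := by
      intro a _
      split_ifs with h
      · subst h; rfl
      · exact Finset.sum_eq_zero fun b _ => rfl
    refine (Finset.sum_congr rfl h2).trans ?_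
    rw [Finset.sum_ite_eq' t c _, if_pos hc]
  · -- ∑ a ∑ b (if b = c …) = ∑ b κ c b • …  (relabel)
    have h2 : ∀ a ∈ t, (∑ b ∈ t, if b = c then κ a b • (Ttil a * Q ^ (2*a+2*b+2)) else 0)
        = κ a c • (Ttil a * Q ^ (2*a+2*c+2)) := by
      intro a _
      rw [Finset.sum_ite_eq' t c _, if_pos hc]
    refine (Finset.sum_congr rfl h2).trans ?_
    refine Finset.sum_congr rfl fun a _ => ?_
    rw [kappa_symm a c, show 2*a+2*c+2 = 2*c+2*a+2 by ring]

lemma cast_succ_ne (n : ℕ) : ((n : ℂ) + 1) ≠ 0 := by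
  have : ((n : ℂ) + 1) = ((n + 1 : ℕ) : ℂ) := by push_cast; ring
  rw [this]
  exact_mod_cast Nat.succ_ne_zero n

lemma half_S3 (Q : OSRing) (t : Finset ℕ) (c : ℕ) :
    ((1:ℂ)/2) • (∑ a ∈ t, ∑ b ∈ t, (κ a b * (2*(a:ℂ)+2*(b:ℂ)+2)) •
        (Ttil a * Ttil b * (Q ^ (2*a+2*b+1) * pderivT c Q)))
      = Sfun Q t * Sg Q t * pderivT c Q := by
  rw [Sfun, Sg, Finset.sum_mul_sum]
  simp only [Finset.smul_sum, Finset.sum_mul, smul_mul_assoc, mul_smul_comm, smul_smul]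
  refine Finset.sum_congr rfl fun a _ => Finset.sum_congr rfl fun b _ => ?_
  have hab : ((a:ℂ) + (b:ℂ) + 1) ≠ 0 := by
    have h : ((a:ℂ) + (b:ℂ) + 1) = (((a + b : ℕ) : ℂ) + 1) := by push_cast; ring
    rw [h]; exact cast_succ_ne _
  have ha : (a.factorial : ℂ) ≠ 0 := Nat.cast_ne_zero.2 a.factorial_ne_zero
  have hb : (b.factorial : ℂ) ≠ 0 := Nat.cast_ne_zero.2 b.factorial_ne_zero
  refine congrArg₂ (fun (r : ℂ) (M : OSRing) => r • M) ?_ ?_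
  · rw [κ]
    field_simp
  · ring

lemma negsum (Q : OSRing) (t : Finset ℕ) (c : ℕ) (hc : c ∈ t) :
    pderivT c (∑ b ∈ t, μ b • (cx * Ttil b * Q ^ (2*b+1)))
      = μ c • (cx * Q ^ (2*c+1)) + cx * Sg Q t * pderivT c Q := by
  classical
  rw [pderivT_sum]
  refine (Finset.sum_congr rfl fun b _ => termN Q b c).trans ?_
  rw [Finset.sum_add_distrib, Finset.sum_ite_eq' t c _, if_pos hc]
  congr 1
  rw [Sg]
  simp only [Finset.mul_sum, Finset.sum_mul, mul_smul_comm, smul_mul_assoc, smul_smul]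
  refine Finset.sum_congr rfl fun b _ => ?_
  have hb : (b.factorial : ℂ) ≠ 0 := Nat.cast_ne_zero.2 b.factorial_ne_zero
  have h2b : (2*(b:ℂ)+1) ≠ 0 := by
    have h : (2*(b:ℂ)+1) = (((2*b : ℕ) : ℂ) + 1) := by push_cast; ring
    rw [h]; exact cast_succ_ne _
  refine congrArg₂ (fun (r : ℂ) (M : OSRing) => r • M) ?_ ?_
  · rw [μ]
    field_simp
  · ring

lemma ML1 {Q LQ : OSRing} (hQ : SolvesQ Q) (hLQ : IsLogQ Q LQ) (s t : Finset ℕ)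
    (hst : s ⊆ t) (h0 : 0 ∈ t) (c : ℕ) (hc : c ∈ t) :
    Ap s (pderivT c (F0E Q LQ t)) (G Q t c) := by
  classical
  set R := pderivT c Q with hR
  have hQSg : Q * Sg Q t = Sfun Q t := by
    rw [Sg, Sfun, Finset.mul_sum]
    refine Finset.sum_congr rfl fun b _ => ?_
    rw [mul_smul_comm]
    refine congrArg (fun (M : OSRing) => (b.factorial:ℂ)⁻¹ • M) ?_
    ring
  have h12 : ((1:ℂ)/2) • ((∑ b ∈ t, κ c b • (Ttil b * Q ^ (2*c+2*b+2)))
        + (∑ b ∈ t, κ c b • (Ttil b * Q ^ (2*c+2*b+2))))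
      = ∑ b ∈ t, κ c b • (Ttil b * Q ^ (2*c+2*b+2)) := by
    rw [← two_smul ℂ (∑ b ∈ t, κ c b • (Ttil b * Q ^ (2*c+2*b+2))), smul_smul]
    norm_num
  have hexp : pderivT c (F0E Q LQ t)
      = G Q t c + (Sfun Q t * Sg Q t * R - cx * Sg Q t * R
          + ((1:ℂ)/4) • (cx ^ 2 * pderivT c LQ)) := by
    rw [F0E, pderivT_add, pderivT_sub, pderivT_smul, pderivT_smul, hdbl Q t c hc,
      negsum Q t c hc, hlog LQ c, smul_add, h12, half_S3 Q t c, G]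
    abel
  have hS : Ap s (Sfun Q t) (((1:ℂ)/2) • cx) := Ap.mono hst (Sfun_approx hQ t h0)
  have hW : Ap s (Sfun Q t * Sg Q t * R - cx * Sg Q t * R
      + ((1:ℂ)/4) • (cx ^ 2 * pderivT c LQ)) 0 := by
    refine Ap.cancel (coeff0_Q_ne hQ) ?_
    rw [mul_zero]
    have hQW : Q * (Sfun Q t * Sg Q t * R - cx * Sg Q t * R
          + ((1:ℂ)/4) • (cx ^ 2 * pderivT c LQ))
        = Sfun Q t * Sfun Q t * R - cx * Sfun Q t * R + ((1:ℂ)/4) • (cx ^ 2 * R) := by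
      rw [mul_add, mul_sub]
      have h1 : Q * (Sfun Q t * Sg Q t * R) = Sfun Q t * Sfun Q t * R := by
        rw [← hQSg]; ring
      have h2 : Q * (cx * Sg Q t * R) = cx * Sfun Q t * R := by
        rw [← hQSg]; ring
      have h3 : Q * (((1:ℂ)/4) • (cx ^ 2 * pderivT c LQ)) = ((1:ℂ)/4) • (cx ^ 2 * R) := by
        rw [mul_smul_comm]
        refine congrArg (fun (M : OSRing) => ((1:ℂ)/4) • M) ?_
        rw [hR, ← hLQ.2.1 c]
        ring
      rw [h1, h2, h3]
    rw [hQW]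
    refine Ap.trans (Ap.add (Ap.sub (Ap.mul (Ap.mul hS hS) (Ap.refl R))
      (Ap.mul (Ap.mul (Ap.refl cx) hS) (Ap.refl R))) (Ap.refl _)) (Ap.of_eq ?_)
    simp only [smul_mul_assoc, mul_smul_comm, smul_smul, pow_two]
    rw [← sub_smul, ← add_smul]
    norm_num
  refine Ap.trans (Ap.of_eq hexp) ?_
  exact Ap.trans (Ap.add (Ap.refl (G Q t c)) hW) (Ap.of_eq (add_zero _))

lemma termG (Q : OSRing) (b j a : ℕ) :
    pderivT a (κ b j • (Ttil j * Q ^ (2*b+2*j+2)))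
      = (if j = a then κ b j • Q ^ (2*b+2*j+2) else 0)
        + (κ b j * (2*(b:ℂ)+2*(j:ℂ)+2)) • (Ttil j * (Q ^ (2*b+2*j+1) * pderivT a Q)) := by
  have hcast : (((2*b+2*j+1 : ℕ) : ℂ) + 1) = 2*(b:ℂ)+2*(j:ℂ)+2 := by push_cast; ring
  rw [pderivT_smul, show 2*b+2*j+2 = (2*b+2*j+1)+1 by ring, pderivT_mul,
    pderivT_Ttil, pderivT_pow, hcast]
  by_cases hja : j = a <;>
    simp only [hja, if_true, if_false, ite_true, ite_false, one_mul, mul_one, zero_mul,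
      mul_zero, add_zero, zero_add, smul_add, mul_smul_comm, smul_smul]

lemma termGN (Q : OSRing) (b a : ℕ) :
    pderivT a (μ b • (cx * Q ^ (2*b+1)))
      = (b.factorial : ℂ)⁻¹ • (cx * (Q ^ (2*b) * pderivT a Q)) := by
  have hcast : (((2*b : ℕ) : ℂ) + 1) = 2*(b:ℂ)+1 := by push_cast; ring
  rw [pderivT_smul, pderivT_mul, pderivT_cx, zero_mul, zero_add, pderivT_pow, hcast,
    mul_smul_comm, smul_smul]
  refine congrArg₂ (fun (r : ℂ) (M : OSRing) => r • M) ?_ rfl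
  rw [μ]
  have hb : (b.factorial : ℂ) ≠ 0 := Nat.cast_ne_zero.2 b.factorial_ne_zero
  have h2b : (2*(b:ℂ)+1) ≠ 0 := by
    have h : (2*(b:ℂ)+1) = (((2*b : ℕ) : ℂ) + 1) := by push_cast; ring
    rw [h]; exact cast_succ_ne _
  field_simp

lemma ML2 {Q : OSRing} (hQ : SolvesQ Q) (s t : Finset ℕ)
    (hst : s ⊆ t) (h0 : 0 ∈ t) (a b : ℕ) (hat : a ∈ t) :
    Ap s (pderivT a (G Q t b)) (κ b a • Q ^ (2*b+2*a+2)) := by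
  classical
  set R := pderivT a Q with hR
  have hsum2 : (∑ j ∈ t, (κ b j * (2*(b:ℂ)+2*(j:ℂ)+2)) • (Ttil j * (Q ^ (2*b+2*j+1) * R)))
      = ((2:ℂ) * (b.factorial : ℂ)⁻¹) • (Q ^ (2*b) * Sfun Q t * R) := by
    rw [Sfun]
    simp only [Finset.smul_sum, Finset.mul_sum, Finset.sum_mul, mul_smul_comm,
      smul_mul_assoc, smul_smul]
    refine Finset.sum_congr rfl fun j _ => ?_
    have hb : (b.factorial : ℂ) ≠ 0 := Nat.cast_ne_zero.2 b.factorial_ne_zero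
    have hj : (j.factorial : ℂ) ≠ 0 := Nat.cast_ne_zero.2 j.factorial_ne_zero
    have hbj : ((b:ℂ) + (j:ℂ) + 1) ≠ 0 := by
      have h : ((b:ℂ) + (j:ℂ) + 1) = (((b + j : ℕ) : ℂ) + 1) := by push_cast; ring
      rw [h]; exact cast_succ_ne _
    refine congrArg₂ (fun (r : ℂ) (M : OSRing) => r • M) ?_ ?_
    · rw [κ]
      field_simp
    · ring
  have hexp : pderivT a (G Q t b)
      = κ b a • Q ^ (2*b+2*a+2)
        + (((2:ℂ) * (b.factorial : ℂ)⁻¹) • (Q ^ (2*b) * Sfun Q t * R)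
          - (b.factorial : ℂ)⁻¹ • (cx * (Q ^ (2*b) * R))) := by
    rw [G, pderivT_sub, pderivT_sum, termGN Q b a,
      Finset.sum_congr rfl fun j _ => termG Q b j a, Finset.sum_add_distrib,
      Finset.sum_ite_eq' t a _, if_pos hat, hsum2]
    abel
  have hS : Ap s (Sfun Q t) (((1:ℂ)/2) • cx) := Ap.mono hst (Sfun_approx hQ t h0)
  refine Ap.trans (Ap.of_eq hexp) ?_
  have hW : Ap s (((2:ℂ) * (b.factorial : ℂ)⁻¹) • (Q ^ (2*b) * Sfun Q t * R)
      - (b.factorial : ℂ)⁻¹ • (cx * (Q ^ (2*b) * R))) 0 := by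
    refine Ap.trans (Ap.sub (Ap.smul _ (Ap.mul (Ap.mul (Ap.refl (Q ^ (2*b))) hS) (Ap.refl R)))
      (Ap.refl _)) (Ap.of_eq ?_)
    simp only [smul_mul_assoc, mul_smul_comm, smul_smul]
    rw [show Q ^ (2*b) * cx * R = cx * (Q ^ (2*b) * R) by ring, ← sub_smul,
      show (2:ℂ) * (b.factorial : ℂ)⁻¹ * ((1:ℂ)/2) - (b.factorial : ℂ)⁻¹ = 0 by ring,
      zero_smul]
  exact Ap.trans (Ap.add (Ap.refl _) hW) (Ap.of_eq (add_zero _))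

/-- `∂²F₀/∂T_{2a+1}∂T_{2b+1} = Q^{2a+2b+2}/(a! b! (a+b+1))` for all `a, b ≥ 0`. -/
theorem okuyama_sakai_F0_TT (Q LQ : OSRing) (hQ : SolvesQ Q) (hLQ : IsLogQ Q LQ)
    (a b : ℕ) :
    pderivT a (pderivT b (F0 Q LQ))
      = (((a.factorial : ℂ) * (b.factorial : ℂ) * ((a:ℂ) + (b:ℂ) + 1))⁻¹) •
          Q ^ (2*a+2*b+2) := by
  classical
  refine MvPowerSeries.ext fun d => ?_
  set t : Finset ℕ := insert 0 (insert a (insert b d.support)) with ht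
  have h0t : (0:ℕ) ∈ t := by simp [ht]
  have hat : a ∈ t := by simp [ht]
  have hbt : b ∈ t := by simp [ht]
  have h1 : Ap t (F0 Q LQ) (F0E Q LQ t) := F0_approx Q LQ t h0t
  have h2 : Ap (insert 0 (insert a d.support)) (pderivT b (F0 Q LQ))
      (pderivT b (F0E Q LQ t)) := by
    refine Ap.pderiv b (Ap.mono ?_ h1)
    intro x hx
    simp only [Finset.mem_insert, ht] at hx ⊢
    tauto
  have h3 : Ap (insert 0 (insert a d.support)) (pderivT b (F0E Q LQ t)) (G Q t b) := by
    refine ML1 hQ hLQ _ t ?_ h0t b hbt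
    intro x hx
    simp only [Finset.mem_insert, ht] at hx ⊢
    tauto
  have h4 := h2.trans h3
  have h5 : Ap d.support (pderivT a (pderivT b (F0 Q LQ))) (pderivT a (G Q t b)) := by
    refine Ap.pderiv a (Ap.mono ?_ h4)
    intro x hx
    simp only [Finset.mem_insert] at hx ⊢
    tauto
  have h6 : Ap d.support (pderivT a (G Q t b)) (κ b a • Q ^ (2*b+2*a+2)) := by
    refine ML2 hQ _ t ?_ h0t a b hat
    intro x hx
    simp only [ht, Finset.mem_insert]
    tauto
  have h7 := (h5.trans h6) d (le_refl _)
  rw [h7]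
  have : κ b a • Q ^ (2*b+2*a+2)
      = (((a.factorial : ℂ) * (b.factorial : ℂ) * ((a:ℂ) + (b:ℂ) + 1))⁻¹) •
          Q ^ (2*a+2*b+2) := by
    rw [show 2*b+2*a+2 = 2*a+2*b+2 by ring]
    refine congrArg₂ (fun (r : ℂ) (M : OSRing) => r • M) ?_ rfl
    rw [κ]
    congr 1
    ring
  rw [this]
end
end
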